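/- arXiv:2110.02214 — 4 statements merged into one kernel-verified Lean document; each statement's English description precedes it below -/
import Mathlib

section
/- Suppose composability relations R1, R2 and composition functions ⊕1, ⊕2 on timed-event streams satisfy, for all event sets E1,E2,E3 and TESs σi over Ei: (σ1, σ2 ⊕2 σ3) ∈ R1(E1, E2 ∪ E3) ∧ (σ2,σ3) ∈ R2(E2,E3) if and only if (σ1,σ2) ∈ R1(E1,E2) ∧ (σ1 ⊕1 σ2, σ3) ∈ R2(E1 ∪ E2, E3). Then the products ×_(R1,⊕1) and ×_(R2,⊕2) satisfy the associativity law C1 ×_(R1,⊕1) (C2 ×_(R2,⊕2) C3) = (C1 ×_(R1,⊕1) C2) ×_(R2,⊕2) C3 for all components if and only if σ1 ⊕1 (σ2 ⊕2 σ3) = (σ1 ⊕1 σ2) ⊕2 σ3 for all such composable TESs. -/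
open scoped NNReal

namespace CPS

/-- An observation: a set of events (observable) together with a time stamp. -/
abbrev Obs (𝔼 : Type) := Set 𝔼 × ℝ≥0

/-- A stream of observations. -/
abbrev Strm (𝔼 : Type) := ℕ → Obs 𝔼

/-- Timed-event streams over an event set `A`: observables are subsets of `A`,
time stamps strictly increase and are unbounded (non-Zeno). -/
def TES {𝔼 : Type} (A : Set 𝔼) : Set (Strm 𝔼) :=
  {σ | (∀ i, (σ i).1 ⊆ A) ∧ (∀ i, (σ i).2 < (σ (i + 1)).2) ∧
    ∀ n : ℕ, ∃ i, (n : ℝ≥0) < (σ i).2}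

/-- A component: an interface (set of events) and a behavior (set of streams). -/
structure Component (𝔼 : Type) where
  E : Set 𝔼
  L : Set (Strm 𝔼)

/-- Product of components parametrized by a composability relation `R` and a
composition function `op` on timed-event streams. -/
def Component.prod {𝔼 : Type} (R : Set 𝔼 → Set 𝔼 → Strm 𝔼 → Strm 𝔼 → Prop)
    (op : Strm 𝔼 → Strm 𝔼 → Strm 𝔼) (C1 C2 : Component 𝔼) : Component 𝔼 :=
  ⟨C1.E ∪ C2.E, {σ | ∃ σ1 ∈ C1.L, ∃ σ2 ∈ C2.L, R C1.E C2.E σ1 σ2 ∧ σ = op σ1 σ2}⟩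

/-- Division of components. -/
def Component.div {𝔼 : Type} (R : Set 𝔼 → Set 𝔼 → Strm 𝔼 → Strm 𝔼 → Prop)
    (op : Strm 𝔼 → Strm 𝔼 → Strm 𝔼) (C C2 : Component 𝔼) : Component 𝔼 :=
  ⟨C.E, {σ | σ ∈ TES C.E ∧ ∃ σ2 ∈ C2.L, R C.E C2.E σ σ2 ∧ op σ σ2 ∈ C.L}⟩

/-- The free composability relation: all pairs composable. -/
def topR {𝔼 : Type} : Set 𝔼 → Set 𝔼 → Strm 𝔼 → Strm 𝔼 → Prop := fun _ _ _ _ => True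

/-- The functional `Φ_κ(E1,E2)` whose greatest fixed point lifts a composability
relation `κ` on observations to one on timed-event streams. -/
def Phi {𝔼 : Type} (κ : Set 𝔼 → Set 𝔼 → Obs 𝔼 → Obs 𝔼 → Prop) (E1 E2 : Set 𝔼)
    (R : Set (Strm 𝔼 × Strm 𝔼)) : Set (Strm 𝔼 × Strm 𝔼) :=
  {p | κ E1 E2 (p.1 0) (p.2 0) ∧
    (((p.1 0).2 < (p.2 0).2 ∧ ((fun i => p.1 (i + 1)), p.2) ∈ R) ∨
     ((p.2 0).2 < (p.1 0).2 ∧ (p.1, (fun i => p.2 (i + 1))) ∈ R) ∨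
     ((p.1 0).2 = (p.2 0).2 ∧ ((fun i => p.1 (i + 1)), (fun i => p.2 (i + 1))) ∈ R))}

/-- The lifting `[κ]`: the greatest fixed point of `Φ_κ(E1,E2)`, i.e. the union
of all post-fixed points. -/
def liftK {𝔼 : Type} (κ : Set 𝔼 → Set 𝔼 → Obs 𝔼 → Obs 𝔼 → Prop) (E1 E2 : Set 𝔼) :
    Set (Strm 𝔼 × Strm 𝔼) :=
  {p | ∃ R, R ⊆ Phi κ E1 E2 R ∧ p ∈ R}

/-- One step of the corecursive merge of two streams. -/
noncomputable def mergeStep {𝔼 : Type} (op : Set 𝔼 → Set 𝔼 → Set 𝔼) (s : Strm 𝔼 × Strm 𝔼) :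
    Obs 𝔼 × (Strm 𝔼 × Strm 𝔼) :=
  if (s.1 0).2 < (s.2 0).2 then (s.1 0, ((fun i => s.1 (i + 1)), s.2))
  else if (s.2 0).2 < (s.1 0).2 then (s.2 0, (s.1, (fun i => s.2 (i + 1))))
  else ((op (s.1 0).1 (s.2 0).1, (s.1 0).2),
        ((fun i => s.1 (i + 1)), (fun i => s.2 (i + 1))))

/-- The state after `n` merge steps. -/
noncomputable def mergeState {𝔼 : Type} (op : Set 𝔼 → Set 𝔼 → Set 𝔼) (s : Strm 𝔼 × Strm 𝔼) :
    ℕ → Strm 𝔼 × Strm 𝔼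
  | 0 => s
  | n + 1 => (mergeStep op (mergeState op s n)).2

/-- The lifting `[+]` of a composition function on observables to streams:
merge by time stamp, combining simultaneous observables with `op`. -/
noncomputable def tmerge {𝔼 : Type} (op : Set 𝔼 → Set 𝔼 → Set 𝔼) (σ1 σ2 : Strm 𝔼) : Strm 𝔼 :=
  fun n => (mergeStep op (mergeState op (σ1, σ2) n)).1

/-- The synchronous composability relation on observations induced by a
relation `cap` on observables. -/
def syncK {𝔼 : Type} (cap : Set 𝔼 → Set 𝔼 → Prop) (E1 E2 : Set 𝔼)
    (o1 o2 : Obs 𝔼) : Prop :=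
  (o1.2 < o2.2 ∧ ¬ ∃ O' ⊆ E2, cap o1.1 O') ∨
  (o2.2 < o1.2 ∧ ¬ ∃ O' ⊆ E1, cap O' o2.1) ∨
  (o1.2 = o2.2 ∧
    ((∃ O1' O1'' O2' O2'', o1.1 = O1' ∪ O1'' ∧ o2.1 = O2' ∪ O2'' ∧ cap O1' O2' ∧
        (∀ O ⊆ E2, ¬ cap O1'' O) ∧ (∀ O ⊆ E1, ¬ cap O O2'')) ∨
      (o1.1 = ∅ ∧ o2.1 = ∅)))

/-- The mutual-exclusion composability relation on observations. -/
def exclK {𝔼 : Type} (cap : Set 𝔼 → Set 𝔼 → Prop) (_E1 _E2 : Set 𝔼)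
    (o1 o2 : Obs 𝔼) : Prop :=
  o1.2 < o2.2 ∨ o2.2 < o1.2 ∨ (o1.2 = o2.2 ∧ ¬ cap o1.1 o2.1)

/-- Strictly increasing, unbounded time streams. -/
def OS : Set (ℕ → ℝ≥0) :=
  {t | (∀ i, t i < t (i + 1)) ∧ ∀ n : ℕ, ∃ i, (n : ℝ≥0) < t i}

/-- The time-shift hyperproperty. -/
def phiShift {𝔼 : Type} (E : Set 𝔼) : Set (Set (Strm 𝔼)) :=
  {Q | Q ⊆ TES E ∧ ∀ σ ∈ Q, ∀ t ∈ OS, ∃ τ ∈ Q,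
    (∀ i, (τ i).1 = (σ i).1) ∧ ∀ i, (τ i).2 = t i}

/-- Associativity of the products `×_(R1,⊕1)` and `×_(R2,⊕2)` under the
compatibility condition on the composability relations. -/
theorem stmt1 (𝔼 : Type) (R1 R2 : Set 𝔼 → Set 𝔼 → Strm 𝔼 → Strm 𝔼 → Prop)
    (op1 op2 : Strm 𝔼 → Strm 𝔼 → Strm 𝔼)
    (h : ∀ (E1 E2 E3 : Set 𝔼) (σ1 σ2 σ3 : Strm 𝔼),
      σ1 ∈ TES E1 → σ2 ∈ TES E2 → σ3 ∈ TES E3 →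
      ((R1 E1 (E2 ∪ E3) σ1 (op2 σ2 σ3) ∧ R2 E2 E3 σ2 σ3) ↔
       (R1 E1 E2 σ1 σ2 ∧ R2 (E1 ∪ E2) E3 (op1 σ1 σ2) σ3))) :
    (∀ C1 C2 C3 : Component 𝔼,
        C1.L ⊆ TES C1.E → C2.L ⊆ TES C2.E → C3.L ⊆ TES C3.E →
        Component.prod R1 op1 C1 (Component.prod R2 op2 C2 C3) =
          Component.prod R2 op2 (Component.prod R1 op1 C1 C2) C3) ↔
      (∀ (E1 E2 E3 : Set 𝔼) (σ1 σ2 σ3 : Strm 𝔼),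
        σ1 ∈ TES E1 → σ2 ∈ TES E2 → σ3 ∈ TES E3 →
        R2 E2 E3 σ2 σ3 → R1 E1 (E2 ∪ E3) σ1 (op2 σ2 σ3) →
        op1 σ1 (op2 σ2 σ3) = op2 (op1 σ1 σ2) σ3) := by
  constructor
  · intro hassoc E1 E2 E3 σ1 σ2 σ3 h1 h2 h3 hR2 hR1
    have heq := hassoc ⟨E1, {σ1}⟩ ⟨E2, {σ2}⟩ ⟨E3, {σ3}⟩
      (by intro x hx; simp at hx; subst hx; exact h1)
      (by intro x hx; simp at hx; subst hx; exact h2)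
      (by intro x hx; simp at hx; subst hx; exact h3)
    have hmem : op1 σ1 (op2 σ2 σ3) ∈
        (Component.prod R1 op1 ⟨E1, {σ1}⟩
          (Component.prod R2 op2 ⟨E2, {σ2}⟩ ⟨E3, {σ3}⟩)).L :=
      ⟨σ1, rfl, op2 σ2 σ3, ⟨σ2, rfl, σ3, rfl, hR2, rfl⟩, hR1, rfl⟩
    rw [heq] at hmem
    obtain ⟨τ, ⟨a, ha, b, hb, _, hτ⟩, c, hc, _, he⟩ := hmem
    simp only [Set.mem_singleton_iff] at ha hb hc
    subst ha; subst hb; subst hc; subst hτ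
    exact he
  · intro hop C1 C2 C3 hL1 hL2 hL3
    simp only [Component.prod]
    congr 1
    · exact (Set.union_assoc _ _ _).symm
    · ext σ
      constructor
      · rintro ⟨σ1, hσ1, τ, ⟨σ2, hσ2, σ3, hσ3, hR2, rfl⟩, hR1, rfl⟩
        have hh := (h C1.E C2.E C3.E σ1 σ2 σ3 (hL1 hσ1) (hL2 hσ2) (hL3 hσ3)).mp
          ⟨hR1, hR2⟩
        exact ⟨op1 σ1 σ2, ⟨σ1, hσ1, σ2, hσ2, hh.1, rfl⟩, σ3, hσ3, hh.2,
          hop C1.E C2.E C3.E σ1 σ2 σ3 (hL1 hσ1) (hL2 hσ2) (hL3 hσ3) hR2 hR1⟩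
      · rintro ⟨τ, ⟨σ1, hσ1, σ2, hσ2, hR1, rfl⟩, σ3, hσ3, hR2, rfl⟩
        have hh := (h C1.E C2.E C3.E σ1 σ2 σ3 (hL1 hσ1) (hL2 hσ2) (hL3 hσ3)).mpr
          ⟨hR1, hR2⟩
        exact ⟨σ1, hσ1, op2 σ2 σ3, ⟨σ2, hσ2, σ3, hσ3, hh.2, rfl⟩, hh.1,
          (hop C1.E C2.E C3.E σ1 σ2 σ3 (hL1 hσ1) (hL2 hσ2) (hL3 hσ3) hh.2 hh.1).symm⟩

end CPS
end

section
/- Let C1 = (E1,L1) and C2 = (E2,L2) be components, R a composability relation and ⊕ a composition function on timed-event streams, and let (E3, L3) = (C1 ×_(R,⊕) C2) /_(R,⊕) C2. Then every σ1 ∈ L1 for which there exists σ2 ∈ L2 with (σ1,σ2) ∈ R(E1 ∪ E2, E2) ∩ R(E1,E2) belongs to L3. -/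
open scoped NNReal

namespace CPS

/-- Division after product: every `σ1 ∈ L1` composable (in both senses) with
some `σ2 ∈ L2` belongs to the behavior of `(C1 ×_(R,⊕) C2) /_(R,⊕) C2`. -/
theorem stmt3 (𝔼 : Type) (R : Set 𝔼 → Set 𝔼 → Strm 𝔼 → Strm 𝔼 → Prop)
    (op : Strm 𝔼 → Strm 𝔼 → Strm 𝔼) (C1 C2 : Component 𝔼)
    (hL1 : C1.L ⊆ TES C1.E) :
    ∀ σ1 ∈ C1.L,
      (∃ σ2 ∈ C2.L, R (C1.E ∪ C2.E) C2.E σ1 σ2 ∧ R C1.E C2.E σ1 σ2) →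
      σ1 ∈ (Component.div R op (Component.prod R op C1 C2) C2).L := by
  rintro σ1 h1 ⟨σ2, h2, hR, hR'⟩
  refine ⟨⟨fun i => (hL1 h1).1 i |>.trans Set.subset_union_left,
    (hL1 h1).2.1, (hL1 h1).2.2⟩, σ2, h2, hR, σ1, h1, σ2, h2, hR', rfl⟩

end CPS
end

section
/- Let + be a composition function on observables (sets of events) and define the lifting [+] on timed-event streams corecursively: σ1[+]σ2 prepends σ1(0) and continues with σ1'[+]σ2 if the head time stamp of σ1 is smaller, symmetrically for σ2, and prepends (O1 + O2, t) and continues with σ1'[+]σ2' when the head time stamps are equal (t). Then for any TESs σ1, σ2, the result σ1[+]σ2 is again a TES: its time stamps are strictly increasing and unbounded. -/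
open scoped NNReal

namespace CPS

/-- Index offsets of the two streams after `n` merge steps. -/
noncomputable def AB {𝔼 : Type} (σ1 σ2 : Strm 𝔼) : ℕ → ℕ × ℕ
  | 0 => (0, 0)
  | n + 1 =>
    if (σ1 (AB σ1 σ2 n).1).2 < (σ2 (AB σ1 σ2 n).2).2 then
      ((AB σ1 σ2 n).1 + 1, (AB σ1 σ2 n).2)
    else if (σ2 (AB σ1 σ2 n).2).2 < (σ1 (AB σ1 σ2 n).1).2 then
      ((AB σ1 σ2 n).1, (AB σ1 σ2 n).2 + 1)
    else ((AB σ1 σ2 n).1 + 1, (AB σ1 σ2 n).2 + 1)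

lemma mergeState_eq {𝔼 : Type} (op : Set 𝔼 → Set 𝔼 → Set 𝔼) (σ1 σ2 : Strm 𝔼) (n : ℕ) :
    mergeState op (σ1, σ2) n =
      ((fun i => σ1 (i + (AB σ1 σ2 n).1)), (fun i => σ2 (i + (AB σ1 σ2 n).2))) := by
  induction n with
  | zero => simp [mergeState, AB]
  | succ n ih =>
    show (mergeStep op (mergeState op (σ1, σ2) n)).2 = _
    rw [ih]
    simp only [mergeStep, AB, Nat.zero_add]
    split_ifs with h h' <;>
      refine Prod.ext ?_ ?_ <;> try rfl
    all_goals funext i; simp only []; congr 1; omega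

lemma tmerge_eq_min {𝔼 : Type} (op : Set 𝔼 → Set 𝔼 → Set 𝔼) (σ1 σ2 : Strm 𝔼) (n : ℕ) :
    (tmerge op σ1 σ2 n).2 = min (σ1 (AB σ1 σ2 n).1).2 (σ2 (AB σ1 σ2 n).2).2 := by
  unfold tmerge
  rw [mergeState_eq]
  simp only [mergeStep, Nat.zero_add]
  split_ifs with h h'
  · exact (min_eq_left h.le).symm
  · exact (min_eq_right h'.le).symm
  · exact (min_eq_left (not_lt.mp h')).symm

/-- The merge `σ1[+]σ2` of two TESs is again a TES: its time stamps are
strictly increasing and unbounded. -/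
theorem stmt7 (𝔼 : Type) (op : Set 𝔼 → Set 𝔼 → Set 𝔼) (σ1 σ2 : Strm 𝔼)
    (h1 : σ1 ∈ TES (Set.univ : Set 𝔼)) (h2 : σ2 ∈ TES (Set.univ : Set 𝔼)) :
    (∀ i, (tmerge op σ1 σ2 i).2 < (tmerge op σ1 σ2 (i + 1)).2) ∧
      ∀ n : ℕ, ∃ i, (n : ℝ≥0) < (tmerge op σ1 σ2 i).2 := by
  have hm1 : StrictMono (fun i => (σ1 i).2) := strictMono_nat_of_lt_succ h1.2.1
  have hm2 : StrictMono (fun i => (σ2 i).2) := strictMono_nat_of_lt_succ h2.2.1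
  constructor
  · intro n
    rw [tmerge_eq_min, tmerge_eq_min]
    simp only [AB]
    split_ifs with h h'
    · exact lt_min ((min_le_left _ _).trans_lt (hm1 (Nat.lt_succ_self _)))
        ((min_le_left _ _).trans_lt h)
    · exact lt_min ((min_le_right _ _).trans_lt h')
        ((min_le_right _ _).trans_lt (hm2 (Nat.lt_succ_self _)))
    · exact lt_min ((min_le_left _ _).trans_lt (hm1 (Nat.lt_succ_self _)))
        ((min_le_right _ _).trans_lt (hm2 (Nat.lt_succ_self _)))
  · intro N
    by_contra hc
    push_neg at hc
    obtain ⟨i1, hi1⟩ := h1.2.2 N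
    obtain ⟨i2, hi2⟩ := h2.2.2 N
    have hsum : ∀ n, n ≤ (AB σ1 σ2 n).1 + (AB σ1 σ2 n).2 := by
      intro n
      induction n with
      | zero => simp
      | succ n ih =>
        simp only [AB]
        split_ifs <;> simp <;> omega
    have hinv : ∀ n, (AB σ1 σ2 n).1 ≤ i1 ∧ (AB σ1 σ2 n).2 ≤ i2 := by
      intro n
      induction n with
      | zero => simp [AB]
      | succ n ih =>
        have hout := hc n
        rw [tmerge_eq_min] at hout
        simp only [AB]
        split_ifs with h h'
        · have ht : (σ1 (AB σ1 σ2 n).1).2 ≤ N := by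
            rw [min_eq_left h.le] at hout; exact hout
          have : (AB σ1 σ2 n).1 < i1 := hm1.lt_iff_lt.mp (ht.trans_lt hi1)
          exact ⟨this, ih.2⟩
        · have ht : (σ2 (AB σ1 σ2 n).2).2 ≤ N := by
            rw [min_eq_right h'.le] at hout; exact hout
          have : (AB σ1 σ2 n).2 < i2 := hm2.lt_iff_lt.mp (ht.trans_lt hi2)
          exact ⟨ih.1, this⟩
        · have he : (σ1 (AB σ1 σ2 n).1).2 = (σ2 (AB σ1 σ2 n).2).2 :=
            le_antisymm (not_lt.mp h') (not_lt.mp h)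
          rw [min_eq_left he.le] at hout
          have ha : (AB σ1 σ2 n).1 < i1 := hm1.lt_iff_lt.mp (hout.trans_lt hi1)
          have hb : (AB σ1 σ2 n).2 < i2 := by
            refine hm2.lt_iff_lt.mp ?_
            calc (σ2 (AB σ1 σ2 n).2).2 = (σ1 (AB σ1 σ2 n).1).2 := he.symm
              _ ≤ N := hout
              _ < (σ2 i2).2 := hi2
          exact ⟨ha, hb⟩
    have h3 := hsum (i1 + i2 + 1)
    have h4 := hinv (i1 + i2 + 1)
    omega

end CPS
end

section
/- If κ is a symmetric composability relation on observations and + is a commutative composition function on observables, then the product of components ×_([κ],[+]) is commutative: C1 ×_([κ],[+]) C2 = C2 ×_([κ],[+]) C1 for all components C1, C2. -/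
open scoped NNReal

namespace CPS

lemma liftK_symm {𝔼 : Type} (κ : Set 𝔼 → Set 𝔼 → Obs 𝔼 → Obs 𝔼 → Prop)
    (hκ : ∀ (A B : Set 𝔼) (o1 o2 : Obs 𝔼), κ A B o1 o2 ↔ κ B A o2 o1)
    (A B : Set 𝔼) (σ1 σ2 : Strm 𝔼) (h : (σ1, σ2) ∈ liftK κ A B) :
    (σ2, σ1) ∈ liftK κ B A := by
  obtain ⟨R, hR, hm⟩ := h
  refine ⟨{p | (p.2, p.1) ∈ R}, ?_, hm⟩
  rintro ⟨a, b⟩ hp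
  obtain ⟨h1, h2⟩ := hR hp
  refine ⟨(hκ A B _ _).mp h1, ?_⟩
  rcases h2 with ⟨h, h'⟩ | ⟨h, h'⟩ | ⟨h, h'⟩
  · exact Or.inr (Or.inl ⟨h, h'⟩)
  · exact Or.inl ⟨h, h'⟩
  · exact Or.inr (Or.inr ⟨h.symm, h'⟩)

lemma mergeStep_swap {𝔼 : Type} (op : Set 𝔼 → Set 𝔼 → Set 𝔼)
    (hop : ∀ O1 O2 : Set 𝔼, op O1 O2 = op O2 O1) (s : Strm 𝔼 × Strm 𝔼) :
    mergeStep op (s.2, s.1) =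
      ((mergeStep op s).1, ((mergeStep op s).2.2, (mergeStep op s).2.1)) := by
  rcases lt_trichotomy (s.1 0).2 (s.2 0).2 with h | h | h
  · simp [mergeStep, h, not_lt.mpr h.le]
  · simp [mergeStep, h, hop]
  · simp [mergeStep, h, not_lt.mpr h.le]

lemma mergeState_swap {𝔼 : Type} (op : Set 𝔼 → Set 𝔼 → Set 𝔼)
    (hop : ∀ O1 O2 : Set 𝔼, op O1 O2 = op O2 O1) (s : Strm 𝔼 × Strm 𝔼) (n : ℕ) :
    mergeState op (s.2, s.1) n =
      ((mergeState op s n).2, (mergeState op s n).1) := by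
  induction n with
  | zero => rfl
  | succ n ih =>
    show (mergeStep op (mergeState op (s.2, s.1) n)).2 = _
    rw [ih, mergeStep_swap op hop]
    rfl

lemma tmerge_comm {𝔼 : Type} (op : Set 𝔼 → Set 𝔼 → Set 𝔼)
    (hop : ∀ O1 O2 : Set 𝔼, op O1 O2 = op O2 O1) (σ1 σ2 : Strm 𝔼) :
    tmerge op σ2 σ1 = tmerge op σ1 σ2 := by
  funext n
  show (mergeStep op (mergeState op (σ2, σ1) n)).1 = _
  rw [show ((σ2, σ1) : Strm 𝔼 × Strm 𝔼) = (((σ1, σ2) : Strm 𝔼 × Strm 𝔼).2, (σ1, σ2).1) from rfl,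
    mergeState_swap op hop, mergeStep_swap op hop]
  rfl

/-- If `κ` is symmetric and `+` is commutative, then the product
`×_([κ],[+])` is commutative. -/
theorem stmt8 (𝔼 : Type) (κ : Set 𝔼 → Set 𝔼 → Obs 𝔼 → Obs 𝔼 → Prop)
    (op : Set 𝔼 → Set 𝔼 → Set 𝔼)
    (hκ : ∀ (A B : Set 𝔼) (o1 o2 : Obs 𝔼), κ A B o1 o2 ↔ κ B A o2 o1)
    (hop : ∀ O1 O2 : Set 𝔼, op O1 O2 = op O2 O1) :
    ∀ C1 C2 : Component 𝔼,
      Component.prod (fun A B σ1 σ2 => (σ1, σ2) ∈ liftK κ A B) (tmerge op) C1 C2 =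
        Component.prod (fun A B σ1 σ2 => (σ1, σ2) ∈ liftK κ A B) (tmerge op) C2 C1 := by
  intro C1 C2
  unfold Component.prod
  congr 1
  · exact Set.union_comm _ _
  · ext σ
    constructor
    · rintro ⟨σ1, h1, σ2, h2, hr, rfl⟩
      exact ⟨σ2, h2, σ1, h1, liftK_symm κ hκ _ _ _ _ hr, (tmerge_comm op hop σ1 σ2).symm⟩
    · rintro ⟨σ2, h2, σ1, h1, hr, rfl⟩
      exact ⟨σ1, h1, σ2, h2, liftK_symm κ hκ _ _ _ _ hr, (tmerge_comm op hop σ2 σ1).symm⟩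

end CPS
end
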